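/- Let ρ = ∑_{i∈I} p_i |e_i⟩⟨e_i| ⊗ ϱ_i be a density matrix on ℂ^d ⊗ (ℂ^{D_1} ⊗ ⋯ ⊗ ℂ^{D_N}), where {e_i} is an orthonormal family in ℂ^d, p_i are probabilities, ϱ_i are density matrices on the environment space, and assume that for every k the single-party reductions satisfy ϱ_i^k ϱ_j^k = 0 for i ≠ j. Let Π_i^k be the support projector of ϱ_i^k. Then for every nonempty subset K ⊆ {1,…,N}: ∑_{i∈I} (1_S ⊗ ⊗_{k∈K} Π_i^k ⊗ 1) ρ (1_S ⊗ ⊗_{k∈K} Π_i^k ⊗ 1) = ρ, i.e., the local measurements {Π_i^k} are Bohr non-disturbing on ρ; the same holds when the projector |e_i⟩⟨e_i| is included on the system factor. -/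

import Mathlib

open scoped Kronecker Matrix ComplexOrder BigOperators
open Matrix

noncomputable section

/-- The rank-one operator `|v⟩⟨w| = v wᴴ`. -/
def ketBra {n : Type*} (v w : n → ℂ) : Matrix n n ℂ := Matrix.vecMulVec v (star w)

/-- A density matrix: positive semidefinite with unit trace. -/
def IsDensityMatrix {n : Type*} [Fintype n] (ρ : Matrix n n ℂ) : Prop :=
  ρ.PosSemidef ∧ ρ.trace = 1

/-- An orthonormal family of vectors. -/
def OrthonormalFamily {n I : Type*} [Fintype n] [DecidableEq I] (e : I → n → ℂ) : Prop :=
  ∀ i j, star (e i) ⬝ᵥ e j = (if i = j then 1 else 0)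

/-- The `N`-fold Kronecker (tensor) product of a family of matrices. -/
def tensorFamily {N : ℕ} {D : Fin N → ℕ} (M : ∀ k, Matrix (Fin (D k)) (Fin (D k)) ℂ) :
    Matrix (∀ k, Fin (D k)) (∀ k, Fin (D k)) ℂ :=
  fun a a' => ∏ k, M k (a k) (a' k)

/-- The Kronecker (tensor) product of the matrices `M k` over the factors `k ∈ K`. -/
def tensorOn {N : ℕ} {D : Fin N → ℕ} (K : Finset (Fin N))
    (M : ∀ k, Matrix (Fin (D k)) (Fin (D k)) ℂ) :
    Matrix (∀ k : K, Fin (D k.1)) (∀ k : K, Fin (D k.1)) ℂ :=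
  fun a a' => ∏ k : K, M k.1 (a k) (a' k)

/-- The partial trace of a matrix on an `N`-fold tensor product over all
tensor factors *not* in `K` (entrywise: sum over equal indices in the traced factors). -/
def reduceTo {N : ℕ} {D : Fin N → ℕ} (K : Finset (Fin N))
    (M : Matrix (∀ k, Fin (D k)) (∀ k, Fin (D k)) ℂ) :
    Matrix (∀ k : K, Fin (D k.1)) (∀ k : K, Fin (D k.1)) ℂ :=
  fun a a' => ∑ b : ∀ k : {k : Fin N // k ∉ K}, Fin (D k.1),
    M (fun k => if h : k ∈ K then a ⟨k, h⟩ else b ⟨k, h⟩)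
      (fun k => if h : k ∈ K then a' ⟨k, h⟩ else b ⟨k, h⟩)

/-- The single-party reduction: the partial trace over all tensor factors except the `k`-th. -/
def reduceSingle {N : ℕ} {D : Fin N → ℕ} (k : Fin N)
    (M : Matrix (∀ l, Fin (D l)) (∀ l, Fin (D l)) ℂ) :
    Matrix (Fin (D k)) (Fin (D k)) ℂ :=
  fun a a' => ∑ b : ∀ l : {l : Fin N // l ≠ k}, Fin (D l.1),
    M (fun l => if h : l = k then cast (congrArg (fun i => Fin (D i)) h.symm) a else b ⟨l, h⟩)
      (fun l => if h : l = k then cast (congrArg (fun i => Fin (D i)) h.symm) a' else b ⟨l, h⟩)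

/-- The support projector of a Hermitian matrix: the orthogonal projection onto its range. -/
def suppProj {n : Type*} [Fintype n] [DecidableEq n] (A : Matrix n n ℂ) : Matrix n n ℂ :=
  if hA : A.IsHermitian then
    (hA.eigenvectorUnitary : Matrix n n ℂ) *
      Matrix.diagonal (fun i => if hA.eigenvalues i = 0 then (0 : ℂ) else 1) *
      (hA.eigenvectorUnitary : Matrix n n ℂ)ᴴ
  else 0

/-!
Write `Πᵢ` for the operator acting as the support projector of `ϱᵢᵏ` on each factor `k ∈ K` and as
the identity elsewhere; it is an orthogonal projection. For a state `σ` and a projector `E` acting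
on the `k`-th factor alone, `tr (E σ) = tr (Eᵏ σᵏ)`, and a projection `E` with `tr (E σ) = 0`
satisfies `E σ = 0`. Applied to `1 - E` this gives `Πᵢ ϱᵢ = ϱᵢ`; applied to a single factor
`k ∈ K` together with `ϱᵢᵏ ϱⱼᵏ = 0` it gives `Πᵢ ϱⱼ = 0` for `i ≠ j`. Hence `Πᵢ ϱⱼ Πᵢ = δᵢⱼ ϱᵢ`,
and summing the sandwiches of `ρ` over `i` returns `ρ`, with or without `|eᵢ⟩⟨eᵢ|` on the system.
-/

open scoped MatrixOrder in
lemma IsStarProjection.mul_eq_zero_of_trace_mul_eq_zero {𝕜 n : Type*} [RCLike 𝕜] [Fintype n]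
    {E σ : Matrix n n 𝕜} (hE : IsStarProjection E) (hσ : σ.PosSemidef)
    (h : (E * σ).trace = 0) : E * σ = 0 := by
  classical
  obtain ⟨B, rfl⟩ := CStarAlgebra.nonneg_iff_eq_star_mul_self.mp hσ.nonneg
  have hEh : Eᴴ = E := hE.isSelfAdjoint
  -- `tr (E σ) = tr ((B E)ᴴ (B E))` since `σ = Bᴴ B` and `E` is a self-adjoint idempotent
  have hBE : B * E = 0 := by
    rw [← trace_conjTranspose_mul_self_eq_zero_iff, ← h, conjTranspose_mul, hEh,
      star_eq_conjTranspose, ← Matrix.mul_assoc, trace_mul_comm, ← Matrix.mul_assoc,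
      ← Matrix.mul_assoc, hE.isIdempotentElem.eq, Matrix.mul_assoc]
  rw [star_eq_conjTranspose, ← Matrix.mul_assoc, ← hEh, ← conjTranspose_mul, hBE,
    conjTranspose_zero, Matrix.zero_mul]

lemma IsStarProjection.mul_mul_self_of_mul_eq {R : Type*} [Semigroup R] [StarMul R] {e a : R}
    (he : IsStarProjection e) (ha : IsSelfAdjoint a) (h : e * a = a) : e * a * e = a := by
  have hae : a * e = a := by
    simpa only [star_mul, he.isSelfAdjoint.star_eq, ha.star_eq] using congrArg star h
  rw [h, hae]

lemma trace_kronecker_one_mul {m p R : Type*} [Fintype m] [Fintype p] [DecidableEq p]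
    [CommSemiring R] (B : Matrix m m R) (M : Matrix (m × p) (m × p) R) :
    ((B ⊗ₖ (1 : Matrix p p R)) * M).trace = (B * of fun x y => ∑ b, M (x, b) (y, b)).trace := by
  simp only [trace, diag, mul_apply, kroneckerMap_apply, one_apply, Fintype.sum_prod_type,
    of_apply, Finset.mul_sum]
  refine Finset.sum_congr rfl fun x _ => ?_
  rw [Finset.sum_comm]
  refine Finset.sum_congr rfl fun b _ => ?_
  rw [Finset.sum_comm]
  refine Finset.sum_congr rfl fun y _ => ?_
  simp [Finset.sum_ite_eq']

lemma Matrix.trace_submatrix_equiv {n o R : Type*} [Fintype n] [Fintype o] [AddCommMonoid R]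
    (M : Matrix n n R) (e : o ≃ n) : (M.submatrix e e).trace = M.trace :=
  Equiv.sum_comp e M.diag

section PiSplitAt

variable {α : Type*} [DecidableEq α] {β : α → Type*} (k : α) (x : β k) (b : ∀ l : {l // l ≠ k}, β l)

@[simp] lemma Equiv.piSplitAt_symm_apply_self : (Equiv.piSplitAt k β).symm (x, b) k = x :=
  congrArg Prod.fst ((Equiv.piSplitAt k β).apply_symm_apply (x, b))

@[simp] lemma Equiv.piSplitAt_symm_apply_ne (l : {l // l ≠ k}) :
    (Equiv.piSplitAt k β).symm (x, b) l = b l :=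
  congrFun (congrArg Prod.snd ((Equiv.piSplitAt k β).apply_symm_apply (x, b))) l

end PiSplitAt

lemma sum_kronecker_mul_sum_smul_kronecker_mul {ι m n R : Type*} [Fintype ι] [DecidableEq ι]
    [Fintype m] [Fintype n] [CommRing R] (S X : ι → Matrix m m R) (T ϱ : ι → Matrix n n R)
    (c : ι → R) (hS : ∀ i, S i * X i * S i = X i)
    (hT : ∀ i j, T i * ϱ j * T i = if i = j then ϱ i else 0) :
    ∑ i, (S i ⊗ₖ T i) * (∑ j, c j • (X j ⊗ₖ ϱ j)) * (S i ⊗ₖ T i) = ∑ j, c j • (X j ⊗ₖ ϱ j) := by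
  simp only [Finset.mul_sum, Finset.sum_mul, Matrix.mul_smul, Matrix.smul_mul,
    ← mul_kronecker_mul, hT, apply_ite, kronecker_zero, smul_zero, Finset.sum_ite_eq,
    Finset.mem_univ, if_true, hS]

lemma ketBra_mul_self_of_dotProduct {n : Type*} [Fintype n] {v : n → ℂ}
    (hv : star v ⬝ᵥ v = 1) : ketBra v v * ketBra v v = ketBra v v := by
  rw [ketBra, vecMulVec_mul_vecMulVec, hv, one_smul]

section SupportProjection

variable {n : Type*} [Fintype n] [DecidableEq n] {A : Matrix n n ℂ}

lemma suppProj_eq_cfc (hA : A.IsHermitian) :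
    suppProj A = cfc (fun x : ℝ => if x = 0 then 0 else 1) A := by
  rw [hA.cfc_eq, IsHermitian.cfc, Unitary.conjStarAlgAut_apply, suppProj, dif_pos hA,
    star_eq_conjTranspose]
  congr 3
  funext i
  split_ifs <;> simp_all

lemma isStarProjection_suppProj (hA : A.IsHermitian) : IsStarProjection (suppProj A) := by
  have hcont := A.finite_real_spectrum.continuousOn fun x : ℝ => if x = 0 then (0 : ℝ) else 1
  rw [suppProj_eq_cfc hA]
  refine ⟨?_, cfc_predicate _ A⟩
  rw [IsIdempotentElem, ← cfc_mul _ _ A hcont hcont]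
  congr 1
  funext x
  split_ifs <;> simp

lemma suppProj_mul_self (hA : A.IsHermitian) : suppProj A * A = A := by
  have hcont := A.finite_real_spectrum.continuousOn fun x : ℝ => if x = 0 then (0 : ℝ) else 1
  calc suppProj A * A = cfc (fun x : ℝ => if x = 0 then 0 else 1) A * cfc (fun x : ℝ => x) A := by
        rw [suppProj_eq_cfc hA, cfc_id' ℝ A]
    _ = cfc (fun x : ℝ => x) A := by
        rw [← cfc_mul _ _ A hcont]
        congr 1
        funext x
        split_ifs <;> simp_all
    _ = A := cfc_id' ℝ A

lemma suppProj_eq_cfc_inv_mul (hA : A.IsHermitian) :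
    suppProj A = cfc (fun x : ℝ => x⁻¹) A * A := by
  have hcont := A.finite_real_spectrum.continuousOn fun x : ℝ => x⁻¹
  calc suppProj A = cfc (fun x : ℝ => x⁻¹ * x) A := by
        rw [suppProj_eq_cfc hA]
        congr 1
        funext x
        split_ifs <;> simp_all
    _ = cfc (fun x : ℝ => x⁻¹) A * cfc (fun x : ℝ => x) A := cfc_mul _ _ A hcont
    _ = cfc (fun x : ℝ => x⁻¹) A * A := by rw [cfc_id' ℝ A]

lemma suppProj_mul_eq_zero (hA : A.IsHermitian) {B : Matrix n n ℂ} (h : A * B = 0) :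
    suppProj A * B = 0 := by
  rw [suppProj_eq_cfc_inv_mul hA, Matrix.mul_assoc, h, Matrix.mul_zero]

end SupportProjection

section TensorFamily

variable {N : ℕ} {D : Fin N → ℕ}

lemma tensorFamily_mul (M M' : ∀ k, Matrix (Fin (D k)) (Fin (D k)) ℂ) :
    tensorFamily M * tensorFamily M' = tensorFamily fun k => M k * M' k := by
  ext a a'
  simp only [tensorFamily, mul_apply, ← Finset.prod_mul_distrib]
  rw [Finset.prod_univ_sum, Fintype.piFinset_univ]

lemma tensorFamily_conjTranspose (M : ∀ k, Matrix (Fin (D k)) (Fin (D k)) ℂ) :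
    (tensorFamily M)ᴴ = tensorFamily fun k => (M k)ᴴ := by
  ext a a'
  simp only [tensorFamily, conjTranspose_apply, star_prod]

lemma isStarProjection_tensorFamily {M : ∀ k, Matrix (Fin (D k)) (Fin (D k)) ℂ}
    (hM : ∀ k, IsStarProjection (M k)) : IsStarProjection (tensorFamily M) where
  isIdempotentElem := by
    rw [IsIdempotentElem, tensorFamily_mul]
    exact congrArg tensorFamily (funext fun k => (hM k).isIdempotentElem.eq)
  isSelfAdjoint := by
    rw [IsSelfAdjoint, star_eq_conjTranspose, tensorFamily_conjTranspose]
    exact congrArg tensorFamily (funext fun k => (hM k).isSelfAdjoint.star_eq)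

lemma reduceSingle_apply (k : Fin N) (M : Matrix (∀ l, Fin (D l)) (∀ l, Fin (D l)) ℂ)
    (x y : Fin (D k)) :
    reduceSingle k M x y = ∑ b, M ((Equiv.piSplitAt k _).symm (x, b))
      ((Equiv.piSplitAt k _).symm (y, b)) := by
  have hins : ∀ (z : Fin (D k)) (b : ∀ l : {l // l ≠ k}, Fin (D l.1)),
      (fun l => if h : l = k then cast (congrArg (fun i => Fin (D i)) h.symm) z else b ⟨l, h⟩)
        = (Equiv.piSplitAt k _).symm (z, b) := by
    intro z b
    funext l
    by_cases h : l = k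
    · subst h
      simp
    · simp [h]
  simp only [reduceSingle, hins]

lemma reduceSingle_isHermitian (k : Fin N) {M : Matrix (∀ l, Fin (D l)) (∀ l, Fin (D l)) ℂ}
    (hM : M.IsHermitian) : (reduceSingle k M).IsHermitian :=
  IsHermitian.ext fun x y => by
    simp only [reduceSingle, star_sum, hM.apply]

lemma tensorFamily_single_submatrix_piSplitAt (k : Fin N)
    (P : ∀ l, Matrix (Fin (D l)) (Fin (D l)) ℂ) :
    (tensorFamily fun l => if l = k then P l else 1).submatrix
        (Equiv.piSplitAt k _).symm (Equiv.piSplitAt k _).symm = P k ⊗ₖ 1 := by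
  ext ⟨x, b⟩ ⟨y, c⟩
  rw [submatrix_apply, tensorFamily, Fintype.prod_eq_mul_prod_subtype_ne _ k]
  simp only [if_pos, Equiv.piSplitAt_symm_apply_self, kroneckerMap_apply]
  have hoff : ∀ i : {l // l ≠ k}, (if i.1 = k then P i else 1) = 1 := fun i => if_neg i.2
  simp only [hoff, Equiv.piSplitAt_symm_apply_ne, one_apply, Fintype.prod_boole, funext_iff]

lemma trace_tensorFamily_single_mul (k : Fin N) (P : ∀ l, Matrix (Fin (D l)) (Fin (D l)) ℂ)
    (σ : Matrix (∀ l, Fin (D l)) (∀ l, Fin (D l)) ℂ) :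
    ((tensorFamily fun l => if l = k then P l else 1) * σ).trace
      = (P k * reduceSingle k σ).trace := by
  rw [← trace_submatrix_equiv _ (Equiv.piSplitAt k fun l => Fin (D l)).symm,
    ← submatrix_mul_equiv _ _ _ (Equiv.piSplitAt k fun l => Fin (D l)).symm,
    tensorFamily_single_submatrix_piSplitAt, trace_kronecker_one_mul]
  congr 2
  ext x y
  rw [reduceSingle_apply]
  rfl

lemma tensorFamily_one : tensorFamily (fun k => (1 : Matrix (Fin (D k)) (Fin (D k)) ℂ)) = 1 := by
  ext a a'
  simp [tensorFamily, one_apply, Fintype.prod_boole, funext_iff]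

lemma trace_reduceSingle (k : Fin N) (σ : Matrix (∀ l, Fin (D l)) (∀ l, Fin (D l)) ℂ) :
    (reduceSingle k σ).trace = σ.trace := by
  simpa [tensorFamily_one] using (trace_tensorFamily_single_mul k (fun _ => 1) σ).symm

lemma tensorFamily_ite_mem_eq_mul_single (P : ∀ l, Matrix (Fin (D l)) (Fin (D l)) ℂ)
    {K : Finset (Fin N)} {k : Fin N} (hk : k ∈ K) :
    (tensorFamily fun l => if l ∈ K then P l else 1) =
      (tensorFamily fun l => if l ∈ K.erase k then P l else 1) *
        tensorFamily fun l => if l = k then P l else 1 := by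
  rw [tensorFamily_mul]
  congr 1
  funext l
  by_cases h : l = k
  · subst h
    simp [hk]
  · simp [h]

lemma tensorFamily_ite_mem_mul_eq_self (P : ∀ l, Matrix (Fin (D l)) (Fin (D l)) ℂ)
    {σ : Matrix (∀ l, Fin (D l)) (∀ l, Fin (D l)) ℂ}
    (hP : ∀ k, (tensorFamily fun l => if l = k then P l else 1) * σ = σ) (K : Finset (Fin N)) :
    (tensorFamily fun l => if l ∈ K then P l else 1) * σ = σ := by
  induction K using Finset.induction_on with
  | empty => simp [tensorFamily_one]
  | insert k K hk ih =>
    rw [tensorFamily_ite_mem_eq_mul_single P (K.mem_insert_self k), Finset.erase_insert hk,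
      Matrix.mul_assoc, hP, ih]

lemma tensorFamily_ite_mem_mul_eq_zero (P : ∀ l, Matrix (Fin (D l)) (Fin (D l)) ℂ)
    {τ : Matrix (∀ l, Fin (D l)) (∀ l, Fin (D l)) ℂ} {K : Finset (Fin N)} {k : Fin N}
    (hk : k ∈ K) (hP : (tensorFamily fun l => if l = k then P l else 1) * τ = 0) :
    (tensorFamily fun l => if l ∈ K then P l else 1) * τ = 0 := by
  rw [tensorFamily_ite_mem_eq_mul_single P hk, Matrix.mul_assoc, hP, Matrix.mul_zero]

variable {σ τ : Matrix (∀ l, Fin (D l)) (∀ l, Fin (D l)) ℂ}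

lemma isStarProjection_tensorFamily_ite_suppProj (hσ : σ.IsHermitian) (p : Fin N → Prop)
    [DecidablePred p] :
    IsStarProjection (tensorFamily fun l => if p l then suppProj (reduceSingle l σ) else 1) :=
  isStarProjection_tensorFamily fun l => by
    split_ifs
    exacts [isStarProjection_suppProj (reduceSingle_isHermitian l hσ), .one _]

lemma tensorFamily_single_suppProj_mul_self (hσ : σ.PosSemidef) (k : Fin N) :
    (tensorFamily fun l => if l = k then suppProj (reduceSingle l σ) else 1) * σ = σ := by
  set E := tensorFamily fun l => if l = k then suppProj (reduceSingle l σ) else 1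
  have hE : IsStarProjection E := isStarProjection_tensorFamily_ite_suppProj hσ.1 (· = k)
  suffices (1 - E) * σ = 0 by rwa [Matrix.sub_mul, Matrix.one_mul, sub_eq_zero, eq_comm] at this
  refine hE.one_sub.mul_eq_zero_of_trace_mul_eq_zero hσ ?_
  rw [Matrix.sub_mul, Matrix.one_mul, trace_sub, trace_tensorFamily_single_mul,
    suppProj_mul_self (reduceSingle_isHermitian k hσ.1), trace_reduceSingle, sub_self]

lemma tensorFamily_single_suppProj_mul_eq_zero (hσ : σ.IsHermitian) (hτ : τ.PosSemidef)
    {k : Fin N} (h : reduceSingle k σ * reduceSingle k τ = 0) :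
    (tensorFamily fun l => if l = k then suppProj (reduceSingle l σ) else 1) * τ = 0 := by
  refine (isStarProjection_tensorFamily_ite_suppProj hσ (· = k)).mul_eq_zero_of_trace_mul_eq_zero
    hτ ?_
  rw [trace_tensorFamily_single_mul,
    suppProj_mul_eq_zero (reduceSingle_isHermitian k hσ) h, trace_zero]

end TensorFamily

lemma tensorFamily_ite_mem_suppProj_mul_mul_self {N : ℕ} {D : Fin N → ℕ} {ι : Type*}
    [DecidableEq ι] {ϱ : ι → Matrix (∀ k, Fin (D k)) (∀ k, Fin (D k)) ℂ}
    (hϱ : ∀ i, (ϱ i).PosSemidef)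
    (horth : ∀ k : Fin N, ∀ i j, i ≠ j → reduceSingle k (ϱ i) * reduceSingle k (ϱ j) = 0)
    {K : Finset (Fin N)} (hK : K.Nonempty) (i j : ι) :
    (tensorFamily fun l => if l ∈ K then suppProj (reduceSingle l (ϱ i)) else 1) * ϱ j *
        (tensorFamily fun l => if l ∈ K then suppProj (reduceSingle l (ϱ i)) else 1) =
      if i = j then ϱ i else 0 := by
  split_ifs with hij
  · subst hij
    exact (isStarProjection_tensorFamily_ite_suppProj (hϱ i).1 (· ∈ K)).mul_mul_self_of_mul_eq
      (hϱ i).1 (tensorFamily_ite_mem_mul_eq_self _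
        (tensorFamily_single_suppProj_mul_self (hϱ i)) K)
  · obtain ⟨k, hk⟩ := hK
    rw [tensorFamily_ite_mem_mul_eq_zero _ hk (tensorFamily_single_suppProj_mul_eq_zero
      (hϱ i).1 (hϱ j) (horth k i j hij)), Matrix.zero_mul]

theorem stmt_6_general {d N : ℕ} {D : Fin N → ℕ} {I : Type*} [Fintype I] [DecidableEq I]
    (p : I → ℝ)
    (e : I → Fin d → ℂ) (he : OrthonormalFamily e)
    (ϱ : I → Matrix (∀ k, Fin (D k)) (∀ k, Fin (D k)) ℂ)
    (hϱ : ∀ i, IsDensityMatrix (ϱ i))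
    (horth : ∀ k : Fin N, ∀ i j, i ≠ j → reduceSingle k (ϱ i) * reduceSingle k (ϱ j) = 0)
    (ρ : Matrix (Fin d × ∀ k, Fin (D k)) (Fin d × ∀ k, Fin (D k)) ℂ)
    (hρ : ρ = ∑ i, (p i : ℂ) • (ketBra (e i) (e i) ⊗ₖ ϱ i))
    (K : Finset (Fin N)) (hK : K.Nonempty) :
    (∑ i, ((1 : Matrix (Fin d) (Fin d) ℂ) ⊗ₖ
        tensorFamily (fun k => if k ∈ K then suppProj (reduceSingle k (ϱ i)) else 1)) * ρ *
        ((1 : Matrix (Fin d) (Fin d) ℂ) ⊗ₖ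
        tensorFamily (fun k => if k ∈ K then suppProj (reduceSingle k (ϱ i)) else 1)) = ρ) ∧
    (∑ i, (ketBra (e i) (e i) ⊗ₖ
        tensorFamily (fun k => if k ∈ K then suppProj (reduceSingle k (ϱ i)) else 1)) * ρ *
        (ketBra (e i) (e i) ⊗ₖ
        tensorFamily (fun k => if k ∈ K then suppProj (reduceSingle k (ϱ i)) else 1)) = ρ) := by
  have hket : ∀ i, ketBra (e i) (e i) * ketBra (e i) (e i) = ketBra (e i) (e i) := fun i =>
    ketBra_mul_self_of_dotProduct ((he i i).trans (if_pos rfl))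
  have hproj := tensorFamily_ite_mem_suppProj_mul_mul_self (fun i => (hϱ i).1) horth hK
  subst hρ
  exact ⟨sum_kronecker_mul_sum_smul_kronecker_mul _ _ _ _ _ (fun i => by simp) hproj,
    sum_kronecker_mul_sum_smul_kronecker_mul _ _ _ _ _ (fun i => by rw [hket, hket]) hproj⟩

/-- Bohr non-disturbance of the local support-projector measurements on SBS states,
with and without the direct measurement on the system. -/
theorem stmt_6 {d N : ℕ} {D : Fin N → ℕ} {I : Type*} [Fintype I] [DecidableEq I]
    (p : I → ℝ) (hp0 : ∀ i, 0 ≤ p i) (hp1 : ∑ i, p i = 1)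
    (e : I → Fin d → ℂ) (he : OrthonormalFamily e)
    (ϱ : I → Matrix (∀ k, Fin (D k)) (∀ k, Fin (D k)) ℂ)
    (hϱ : ∀ i, IsDensityMatrix (ϱ i))
    (horth : ∀ k : Fin N, ∀ i j, i ≠ j → reduceSingle k (ϱ i) * reduceSingle k (ϱ j) = 0)
    (ρ : Matrix (Fin d × ∀ k, Fin (D k)) (Fin d × ∀ k, Fin (D k)) ℂ)
    (hρ : ρ = ∑ i, (p i : ℂ) • (ketBra (e i) (e i) ⊗ₖ ϱ i))
    (K : Finset (Fin N)) (hK : K.Nonempty) :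
    (∑ i, ((1 : Matrix (Fin d) (Fin d) ℂ) ⊗ₖ
        tensorFamily (fun k => if k ∈ K then suppProj (reduceSingle k (ϱ i)) else 1)) * ρ *
        ((1 : Matrix (Fin d) (Fin d) ℂ) ⊗ₖ
        tensorFamily (fun k => if k ∈ K then suppProj (reduceSingle k (ϱ i)) else 1)) = ρ) ∧
    (∑ i, (ketBra (e i) (e i) ⊗ₖ
        tensorFamily (fun k => if k ∈ K then suppProj (reduceSingle k (ϱ i)) else 1)) * ρ *
        (ketBra (e i) (e i) ⊗ₖ
        tensorFamily (fun k => if k ∈ K then suppProj (reduceSingle k (ϱ i)) else 1)) = ρ) :=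
  stmt_6_general p e he ϱ hϱ horth ρ hρ K hK
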